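/- arXiv:1401.5896 — 4 statements merged into one kernel-verified Lean document; each statement's English description precedes it below -/
import Mathlib

section
/- Lower bound on share min-entropy in min-entropy-secure secret sharing: suppose S, V_1, …, V_n are random variables on finite sets such that for some index i and some set F ⊆ [n] with i ∉ F, (a) S is a deterministic function of (V_i, V_F) (correctness on F ∪ {i}), and (b) R_∞(S|V_F) ≥ R_∞(S) − ε (ε-security on F). Then R_∞(V_i) ≥ R_∞(S) − ε. -/
open Finset Real Filter

/-- `P` is a probability mass function on the finite set `α`. -/
def IsPMF {α : Type*} [Fintype α] (P : α → ℝ) : Prop :=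
  (∀ x, 0 ≤ P x) ∧ ∑ x, P x = 1

/-- Min-entropy `R_∞(X) = - log max_x P(x)`. -/
noncomputable def minEnt {α : Type*} [Fintype α] [Nonempty α] (P : α → ℝ) : ℝ :=
  - Real.log (⨆ x, P x)

/-- Rényi entropy of order `a`: `R_a(X) = (1/(1-a)) log Σ_x P(x)^a`. -/
noncomputable def renyiEnt {α : Type*} [Fintype α] (a : ℝ) (P : α → ℝ) : ℝ :=
  (1 / (1 - a)) * Real.log (∑ x, P x ^ a)

/-- Marginal on the first component of a joint distribution. -/
noncomputable def margX {α β : Type*} [Fintype α] [Fintype β] (P : α × β → ℝ) : α → ℝ :=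
  fun x => ∑ y, P (x, y)

/-- Marginal on the second component of a joint distribution. -/
noncomputable def margY {α β : Type*} [Fintype α] [Fintype β] (P : α × β → ℝ) : β → ℝ :=
  fun y => ∑ x, P (x, y)

/-- Average conditional min-entropy
`R_∞(X|Y) = - log Σ_y P_Y(y) max_x P_{X|Y}(x|y)`. -/
noncomputable def condMinEnt {α β : Type*} [Fintype α] [Fintype β] [Nonempty α]
    (P : α × β → ℝ) : ℝ :=
  - Real.log (∑ y, margY P y * ⨆ x, P (x, y) / margY P y)

/-- Arimoto's conditional Rényi entropy of order `a`:
`R_a(X|Y) = (a/(1-a)) log Σ_y P_Y(y) (Σ_x P_{X|Y}(x|y)^a)^(1/a)`. -/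
noncomputable def condRenyiEnt {α β : Type*} [Fintype α] [Fintype β]
    (a : ℝ) (P : α × β → ℝ) : ℝ :=
  (a / (1 - a)) *
    Real.log (∑ y, margY P y * (∑ x, (P (x, y) / margY P y) ^ a) ^ (1 / a))

/-- Shannon entropy `H(X) = - Σ_x P(x) log P(x)`. -/
noncomputable def shannonEnt {α : Type*} [Fintype α] (P : α → ℝ) : ℝ :=
  ∑ x, Real.negMulLog (P x)

/-- Conditional Shannon entropy `H(X|Y) = H(XY) - H(Y)`. -/
noncomputable def condShannonEnt {α β : Type*} [Fintype α] [Fintype β]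
    (P : α × β → ℝ) : ℝ :=
  shannonEnt P - shannonEnt (margY P)

/-- Distribution of the random variable `X : Ω → α` under the pmf `μ` on `Ω`. -/
noncomputable def dist {Ω α : Type*} [Fintype Ω] [DecidableEq α]
    (μ : Ω → ℝ) (X : Ω → α) : α → ℝ :=
  fun x => ∑ ω, if X ω = x then μ ω else 0


section ShareAux

variable {α : Type*} [Fintype α] [Nonempty α]

private lemma mul_ciSup_div' {g : α → ℝ} {m : ℝ} (hm : 0 < m) :
    m * (⨆ x, g x / m) = ⨆ x, g x := by
  have hbdd : BddAbove (Set.range g) := (Set.finite_range g).bddAbove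
  have hbdd' : BddAbove (Set.range fun x => g x / m) := (Set.finite_range _).bddAbove
  apply le_antisymm
  · rw [mul_comm, ← le_div_iff₀ hm]
    exact ciSup_le fun x => by
      rw [div_le_div_iff_of_pos_right hm]
      exact le_ciSup hbdd x
  · exact ciSup_le fun x => by
      rw [show g x = m * (g x / m) by field_simp]
      exact mul_le_mul_of_nonneg_left (le_ciSup hbdd' x) hm.le

end ShareAux

/-- Lower bound on share min-entropy in min-entropy-secure secret
sharing: if `S` is a deterministic function of `(V_i, V_F)` (correctness on
`F ∪ {i}` with `i ∉ F`) and `R_∞(S|V_F) ≥ R_∞(S) - ε` (ε-security on `F`),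
then `R_∞(V_i) ≥ R_∞(S) - ε`. -/
theorem share_minEnt_lower_bound {Ω 𝓢 𝓥 : Type*} [Fintype Ω] [Fintype 𝓢]
    [Fintype 𝓥] [DecidableEq 𝓢] [DecidableEq 𝓥] [Nonempty 𝓢] [Nonempty 𝓥] {n : ℕ}
    (μ : Ω → ℝ) (hμ : IsPMF μ) (S : Ω → 𝓢) (V : Fin n → Ω → 𝓥)
    (i : Fin n) (F : Finset (Fin n)) (hiF : i ∉ F) (ε : ℝ)
    (hcorr : ∃ f : 𝓥 × (F → 𝓥) → 𝓢,
      ∀ ω, μ ω ≠ 0 → S ω = f (V i ω, fun j => V j.1 ω))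
    (hsec : minEnt (dist μ S) - ε ≤
      condMinEnt (dist μ (fun ω => (S ω, fun j : F => V j.1 ω)))) :
    minEnt (dist μ S) - ε ≤ minEnt (dist μ (V i)) := by
  obtain ⟨f, hf⟩ := hcorr
  set VF : Ω → (F → 𝓥) := fun ω => fun j : F => V j.1 ω with hVF
  set P : 𝓢 × (F → 𝓥) → ℝ := dist μ (fun ω => (S ω, VF ω)) with hP
  set Q : 𝓥 → ℝ := dist μ (V i) with hQ
  have hPnn : ∀ p, 0 ≤ P p := fun p =>
    Finset.sum_nonneg fun ω _ => by split <;> simp [hμ.1 ω]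
  have hQnn : ∀ v, 0 ≤ Q v := fun v =>
    Finset.sum_nonneg fun ω _ => by split <;> simp [hμ.1 ω]
  have hbddP : ∀ y, BddAbove (Set.range fun s => P (s, y)) := fun y =>
    (Set.finite_range _).bddAbove
  -- Claim A : every Q v is at most ∑ y, sup_s P (s, y)
  have claimA : ∀ v, Q v ≤ ∑ y, ⨆ s, P (s, y) := by
    intro v
    have h1 : Q v = ∑ y, ∑ ω, if VF ω = y ∧ V i ω = v then μ ω else 0 := by
      rw [Finset.sum_comm]
      apply Finset.sum_congr rfl
      intro ω _
      by_cases h : V i ω = v <;> simp [h, Finset.sum_ite_eq', and_comm]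
    rw [h1]
    apply Finset.sum_le_sum
    intro y _
    have h2 : (∑ ω, if VF ω = y ∧ V i ω = v then μ ω else 0) ≤ P (f (v, y), y) := by
      apply Finset.sum_le_sum
      intro ω _
      by_cases hμ0 : μ ω = 0
      · split <;> split <;> simp [hμ0]
      · by_cases hc : VF ω = y ∧ V i ω = v
        · have hS : S ω = f (v, y) := by
            rw [hf ω hμ0, ← hc.1, ← hc.2]
          simp [hc, hP, _root_.dist, hS, Prod.ext_iff]
        · have : (0:ℝ) ≤ if (S ω, VF ω) = (f (v, y), y) then μ ω else 0 := by
            split <;> simp [hμ.1 ω]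
          simpa [hc] using this
    exact h2.trans (le_ciSup (hbddP y) (f (v, y)))
  -- the conditional min-entropy sum equals ∑ y, sup_s P (s, y)
  have hcond : (∑ y, margY P y * ⨆ s, P (s, y) / margY P y) = ∑ y, ⨆ s, P (s, y) := by
    apply Finset.sum_congr rfl
    intro y _
    rcases eq_or_lt_of_le (Finset.sum_nonneg fun s _ => hPnn (s, y)) with hm | hm
    · have hz : ∀ s, P (s, y) = 0 := by
        intro s
        have := (Finset.sum_eq_zero_iff_of_nonneg fun s _ => hPnn (s, y)).1 hm.symm
        exact this s (Finset.mem_univ s)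
      have h0 : margY P y = 0 := hm.symm
      simp [h0, hz]
    · have hmy : margY P y = ∑ s, P (s, y) := rfl
      rw [hmy]
      exact mul_ciSup_div' hm
  -- positivity of sup Q
  have hQsum : ∑ v, Q v = 1 := by
    rw [hQ]
    simp only [_root_.dist]
    rw [Finset.sum_comm]
    have : ∀ ω, (∑ v, if V i ω = v then μ ω else 0) = μ ω := by
      intro ω; simp [Finset.sum_ite_eq']
    simp only [this, hμ.2]
  have hQpos : 0 < ⨆ v, Q v := by
    by_contra h
    push_neg at h
    have hall : ∀ v, Q v = 0 := fun v =>
      le_antisymm ((le_ciSup ((Set.finite_range Q).bddAbove) v).trans h) (hQnn v)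
    rw [Finset.sum_congr rfl fun v _ => hall v] at hQsum
    simp at hQsum
  -- conclude
  have hle : (⨆ v, Q v) ≤ ∑ y, ⨆ s, P (s, y) := ciSup_le claimA
  have hlog : Real.log (⨆ v, Q v) ≤ Real.log (∑ y, ⨆ s, P (s, y)) :=
    Real.log_le_log hQpos hle
  have hfinal : condMinEnt P ≤ minEnt Q := by
    unfold condMinEnt minEnt
    rw [hcond]
    linarith
  refine hsec.trans (le_trans (le_of_eq ?_) hfinal)
  rfl
end

section
/- Lower bound on share Rényi entropy in ε-secure secret sharing: for any fixed α ∈ (1,∞), if S is a deterministic function of (V_i, V_F) and R_α(S|V_F) ≥ R_α(S) − ε for some F not containing i, then R_α(V_i) ≥ R_α(S) − ε. -/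
/-!
Write `‖P‖_a = (∑ x, P x ^ a) ^ (1 / a)`. Then `R_a(S|V_F) = a/(1-a) log ∑_y ‖P_{S V_F}(·, y)‖_a`
and `R_a(V_i) = a/(1-a) log ‖P_{V_i}‖_a`, with `a/(1-a) < 0`. On the fibre `V_F = y` the law of
`S` is the pushforward of the law of `V_i` under `f(·, y)`, and for `a ≥ 1` a pushforward can only
increase the `ℓ^a` norm (`t ↦ t^a` is superadditive). Minkowski's inequality applied to
`P_{V_i} = ∑_y P_{V_i V_F}(·, y)` then gives `‖P_{V_i}‖_a ≤ ∑_y ‖P_{S V_F}(·, y)‖_a`, i.e.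
`R_a(S|V_F) ≤ R_a(V_i)`, and the security assumption finishes the proof.
-/

open Finset Real Filter

section PowerSums

variable {ι α : Type*}

theorem Finset.sum_rpow_le_rpow_sum {s : Finset ι} {r : ι → ℝ} (hr : ∀ i ∈ s, 0 ≤ r i)
    {p : ℝ} (hp : 1 ≤ p) : ∑ i ∈ s, r i ^ p ≤ (∑ i ∈ s, r i) ^ p := by
  induction s using Finset.cons_induction with
  | empty => simp [Real.zero_rpow (by linarith : p ≠ 0)]
  | cons j s hj ih =>
    rw [forall_mem_cons] at hr
    rw [sum_cons, sum_cons]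
    calc r j ^ p + ∑ i ∈ s, r i ^ p ≤ r j ^ p + (∑ i ∈ s, r i) ^ p := by gcongr; exact ih hr.2
      _ ≤ (r j + ∑ i ∈ s, r i) ^ p := add_rpow_le_rpow_add hr.1 (sum_nonneg hr.2) hp

variable [Fintype α]

noncomputable def pNorm (a : ℝ) (P : α → ℝ) : ℝ :=
  (∑ x, P x ^ a) ^ (1 / a)

theorem pNorm_eq_norm_toLp {a : ℝ} (ha : 0 < a) {P : α → ℝ} (hP : 0 ≤ P) :
    pNorm a P = ‖WithLp.toLp (ENNReal.ofReal a) P‖ := by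
  rw [PiLp.norm_eq_sum (by rwa [ENNReal.toReal_ofReal ha.le])]
  simp [pNorm, ENNReal.toReal_ofReal ha.le, abs_of_nonneg (hP _)]

theorem pNorm_sum_le {a : ℝ} (ha : 1 ≤ a) (t : Finset ι) {P : ι → α → ℝ} (hP : ∀ i, 0 ≤ P i) :
    pNorm a (∑ i ∈ t, P i) ≤ ∑ i ∈ t, pNorm a (P i) := by
  have : Fact (1 ≤ ENNReal.ofReal a) := ⟨by simpa using ha⟩
  have ha0 : 0 < a := by linarith
  rw [pNorm_eq_norm_toLp ha0 (sum_nonneg fun i _ => hP i), WithLp.toLp_sum]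
  simp_rw [pNorm_eq_norm_toLp ha0 (hP _)]
  exact norm_sum_le _ _

theorem pNorm_div {a : ℝ} (ha : 0 < a) {P : α → ℝ} (hP : 0 ≤ P) {c : ℝ} (hc : 0 ≤ c) :
    pNorm a (fun x => P x / c) = pNorm a P / c := by
  simp only [pNorm, Real.div_rpow (hP _) hc, ← sum_div]
  rw [Real.div_rpow (sum_nonneg fun x _ => Real.rpow_nonneg (hP x) a) (Real.rpow_nonneg hc a),
    one_div, Real.rpow_rpow_inv hc ha.ne']

theorem mul_pNorm_div_sum {a : ℝ} (ha : 0 < a) {P : α → ℝ} (hP : 0 ≤ P) :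
    (∑ x, P x) * pNorm a (fun x => P x / ∑ x, P x) = pNorm a P := by
  rcases (sum_nonneg fun x _ => hP x).eq_or_lt with h0 | hpos
  · have hzero : P = 0 :=
      funext fun x => (sum_eq_zero_iff_of_nonneg fun x _ => hP x).mp h0.symm x (mem_univ x)
    simp [hzero, pNorm, Real.zero_rpow ha.ne', Real.zero_rpow (inv_pos.mpr ha).ne']
  · rw [pNorm_div ha hP hpos.le, mul_div_cancel₀ _ hpos.ne']

theorem sum_rpow_pos {a : ℝ} {P : α → ℝ} (hP : 0 ≤ P) (hsum : 0 < ∑ x, P x) :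
    0 < ∑ x, P x ^ a := by
  obtain ⟨x, -, hx⟩ := exists_lt_of_sum_lt (by simpa using hsum : ∑ x : α, (0 : ℝ) < ∑ x, P x)
  exact sum_pos' (fun y _ => Real.rpow_nonneg (hP y) a) ⟨x, mem_univ x, Real.rpow_pos_of_pos hx a⟩

end PowerSums

section Distribution

variable {Ω α β γ : Type*} [Fintype Ω] [DecidableEq α] [DecidableEq β] [DecidableEq γ]

theorem dist_nonneg_of_nonneg {μ : Ω → ℝ} (hμ : 0 ≤ μ) (X : Ω → α) : 0 ≤ dist μ X :=
  fun _ => sum_nonneg fun ω _ => by split_ifs; exacts [hμ ω, le_rfl]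

theorem sum_dist [Fintype α] (μ : Ω → ℝ) (X : Ω → α) : ∑ x, dist μ X x = ∑ ω, μ ω := by
  unfold _root_.dist
  rw [sum_comm]
  simp

theorem dist_congr {μ : Ω → ℝ} {X X' : Ω → α} (h : ∀ ω, μ ω ≠ 0 → X ω = X' ω) :
    dist μ X = dist μ X' :=
  funext fun _ => sum_congr rfl fun ω _ => by by_cases hω : μ ω = 0 <;> simp [hω, h]

theorem dist_comp_apply [Fintype α] (μ : Ω → ℝ) (X : Ω → α) (g : α → γ) (z : γ) :
    dist μ (fun ω => g (X ω)) z = ∑ x with g x = z, dist μ X x := by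
  unfold _root_.dist
  rw [sum_comm]
  refine sum_congr rfl fun ω _ => ?_
  simp [sum_ite_eq]

theorem dist_pair_apply (μ : Ω → ℝ) (X : Ω → α) (Y : Ω → β) (x : α) (y : β) :
    dist μ (fun ω => (X ω, Y ω)) (x, y) = dist (fun ω => if Y ω = y then μ ω else 0) X x :=
  sum_congr rfl fun ω _ => by simp [ite_and]

theorem dist_eq_sum_dist_pair [Fintype β] (μ : Ω → ℝ) (X : Ω → α) (Y : Ω → β) :
    dist μ X = ∑ y, fun x => dist μ (fun ω => (X ω, Y ω)) (x, y) := by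
  funext x
  simp only [Finset.sum_apply, dist_pair_apply]
  unfold _root_.dist
  rw [sum_comm]
  simp

theorem pNorm_dist_le_pNorm_dist_comp [Fintype α] [Fintype γ] {a : ℝ} (ha : 1 ≤ a)
    {μ : Ω → ℝ} (hμ : 0 ≤ μ) (X : Ω → α) (g : α → γ) :
    pNorm a (dist μ X) ≤ pNorm a (dist μ (fun ω => g (X ω))) := by
  have hX := dist_nonneg_of_nonneg hμ X
  refine Real.rpow_le_rpow (sum_nonneg fun x _ => Real.rpow_nonneg (hX x) a) ?_
    (by positivity)
  calc ∑ x, dist μ X x ^ a = ∑ z, ∑ x with g x = z, dist μ X x ^ a :=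
        (sum_fiberwise _ _ _).symm
    _ ≤ ∑ z, (∑ x with g x = z, dist μ X x) ^ a :=
        sum_le_sum fun z _ => sum_rpow_le_rpow_sum (fun x _ => hX x) ha
    _ = ∑ z, dist μ (fun ω => g (X ω)) z ^ a := by simp_rw [dist_comp_apply]

end Distribution

section Renyi

variable {α β : Type*} [Fintype α] [Fintype β] {a : ℝ}

theorem renyiEnt_eq_mul_log_pNorm (ha : a ≠ 0) {P : α → ℝ} (hP : 0 < ∑ x, P x ^ a) :
    renyiEnt a P = a / (1 - a) * log (pNorm a P) := by
  rw [renyiEnt, pNorm, Real.log_rpow hP]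
  field_simp

theorem condRenyiEnt_eq_mul_log_sum_pNorm (ha : 0 < a) {P : α × β → ℝ} (hP : 0 ≤ P) :
    condRenyiEnt a P = a / (1 - a) * log (∑ y, pNorm a (fun x => P (x, y))) := by
  unfold condRenyiEnt
  congr 2
  exact sum_congr rfl fun y _ => mul_pNorm_div_sum ha fun x => hP (x, y)

end Renyi

theorem condRenyiEnt_le_renyiEnt_of_comp {Ω α β γ : Type*} [Fintype Ω] [Fintype α] [Fintype β]
    [Fintype γ] [DecidableEq α] [DecidableEq β] [DecidableEq γ] {a : ℝ} (ha : 1 < a)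
    {μ : Ω → ℝ} (hμ : IsPMF μ) (X : Ω → α) (Y : Ω → β) (Z : Ω → γ) {g : α × β → γ}
    (hZ : ∀ ω, μ ω ≠ 0 → Z ω = g (X ω, Y ω)) :
    condRenyiEnt a (dist μ (fun ω => (Z ω, Y ω))) ≤ renyiEnt a (dist μ X) := by
  have ha0 : 0 < a := by linarith
  have hfiber : ∀ y, pNorm a (fun x => dist μ (fun ω => (X ω, Y ω)) (x, y)) ≤
      pNorm a (fun z => dist μ (fun ω => (Z ω, Y ω)) (z, y)) := by
    intro y
    have hZy : ∀ ω, (if Y ω = y then μ ω else 0) ≠ 0 → Z ω = g (X ω, y) := by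
      intro ω hω
      split_ifs at hω with hY
      exacts [hY ▸ hZ ω hω, absurd rfl hω]
    simp only [dist_pair_apply, dist_congr hZy]
    exact pNorm_dist_le_pNorm_dist_comp ha.le (fun ω => by split_ifs; exacts [hμ.1 ω, le_rfl]) X
      (fun x => g (x, y))
  have hminkowski : pNorm a (dist μ X) ≤
      ∑ y, pNorm a (fun x => dist μ (fun ω => (X ω, Y ω)) (x, y)) := by
    rw [dist_eq_sum_dist_pair μ X Y]
    exact pNorm_sum_le ha.le _ fun y x => dist_nonneg_of_nonneg hμ.1 _ (x, y)
  have hsum : 0 < ∑ x, dist μ X x ^ a :=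
    sum_rpow_pos (dist_nonneg_of_nonneg hμ.1 X) (by rw [sum_dist, hμ.2]; exact one_pos)
  rw [condRenyiEnt_eq_mul_log_sum_pNorm ha0 (dist_nonneg_of_nonneg hμ.1 _),
    renyiEnt_eq_mul_log_pNorm ha0.ne' hsum]
  refine mul_le_mul_of_nonpos_left ?_ (div_nonpos_of_nonneg_of_nonpos ha0.le (by linarith))
  exact log_le_log (rpow_pos_of_pos hsum _) (hminkowski.trans (sum_le_sum fun y _ => hfiber y))

theorem share_renyiEnt_lower_bound_general {Ω 𝓢 𝓥 : Type*} [Fintype Ω] [Fintype 𝓢]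
    [Fintype 𝓥] [DecidableEq 𝓢] [DecidableEq 𝓥] {n : ℕ}
    (a : ℝ) (ha : 1 < a)
    (μ : Ω → ℝ) (hμ : IsPMF μ) (S : Ω → 𝓢) (V : Fin n → Ω → 𝓥)
    (i : Fin n) (F : Finset (Fin n)) (ε : ℝ)
    (hcorr : ∃ f : 𝓥 × (F → 𝓥) → 𝓢,
      ∀ ω, μ ω ≠ 0 → S ω = f (V i ω, fun j => V j.1 ω))
    (hsec : renyiEnt a (dist μ S) - ε ≤
      condRenyiEnt a (dist μ (fun ω => (S ω, fun j : F => V j.1 ω)))) :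
    renyiEnt a (dist μ S) - ε ≤ renyiEnt a (dist μ (V i)) := by
  obtain ⟨f, hf⟩ := hcorr
  exact hsec.trans (condRenyiEnt_le_renyiEnt_of_comp ha hμ (V i) (fun ω (j : F) => V j.1 ω) S hf)

/-- Lower bound on share Rényi entropy in ε-secure secret
sharing: for any fixed `a ∈ (1,∞)`, if `S` is a deterministic function of
`(V_i, V_F)` and `R_a(S|V_F) ≥ R_a(S) - ε` with `i ∉ F`, then
`R_a(V_i) ≥ R_a(S) - ε`. -/
theorem share_renyiEnt_lower_bound {Ω 𝓢 𝓥 : Type*} [Fintype Ω] [Fintype 𝓢]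
    [Fintype 𝓥] [DecidableEq 𝓢] [DecidableEq 𝓥] {n : ℕ}
    (a : ℝ) (ha : 1 < a)
    (μ : Ω → ℝ) (hμ : IsPMF μ) (S : Ω → 𝓢) (V : Fin n → Ω → 𝓥)
    (i : Fin n) (F : Finset (Fin n)) (hiF : i ∉ F) (ε : ℝ)
    (hcorr : ∃ f : 𝓥 × (F → 𝓥) → 𝓢,
      ∀ ω, μ ω ≠ 0 → S ω = f (V i ω, fun j => V j.1 ω))
    (hsec : renyiEnt a (dist μ S) - ε ≤
      condRenyiEnt a (dist μ (fun ω => (S ω, fun j : F => V j.1 ω)))) :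
    renyiEnt a (dist μ S) - ε ≤ renyiEnt a (dist μ (V i)) :=
  share_renyiEnt_lower_bound_general a ha μ hμ S V i F ε hcorr hsec
end

section
/- In the XOR-based (n,n)-threshold construction with bias p ∈ (1/2, 1), for every subset F ⊂ [n] with |F| = n−1, the average conditional min-entropy satisfies R_∞(S | V_F) = R_∞(S) = −log p; i.e., the scheme is min-entropy secure. -/
open Finset Real Filter

/-- The joint pmf of `(S, V_1, …, V_m)` where `S, V_1, …, V_m` are i.i.d. on
`ZMod 2` with probability `p` of being `0`. -/
noncomputable def muXOR (m : ℕ) (p : ℝ) : ZMod 2 × (Fin m → ZMod 2) → ℝ :=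
  fun sv => (if sv.1 = 0 then p else 1 - p) *
    ∏ j, (if sv.2 j = 0 then p else 1 - p)

/-- The `i`-th share of the XOR-based `(n,n)`-threshold scheme: `V_i` for
`i ∈ [n-1]` and `V_n = S ⊕ V_1 ⊕ ⋯ ⊕ V_{n-1}` for the last index. -/
noncomputable def xorShare (n : ℕ) (i : Fin n)
    (ω : ZMod 2 × (Fin (n - 1) → ZMod 2)) : ZMod 2 :=
  if h : (i : ℕ) < n - 1 then ω.2 ⟨i, h⟩ else ω.1 + ∑ j, ω.2 j

/-!
Let `i` be a share index outside `F`. Adding to the randomness `(S, V)` the sharing of the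
secret `1` whose only nonzero share is the `i`-th one flips `S`, leaves every share in `F`
unchanged and, as `p ≥ 1/2`, does not increase the probability of an outcome with `S = 0`.
Hence `P(S = 1, V_F = y) ≤ P(S = 0, V_F = y)` for every `y`: the best guess of `S` from `V_F`
is always `0`, and it succeeds with probability `P(S = 0) = p`.
-/

lemma ZMod.eq_zero_or_eq_one (x : ZMod 2) : x = 0 ∨ x = 1 := by
  revert x; decide

section Distributions

variable {Ω α β : Type*} [Fintype Ω]

lemma dist_apply_nonneg [DecidableEq α] {μ : Ω → ℝ} (hμ : ∀ ω, 0 ≤ μ ω) (X : Ω → α) (a : α) :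
    0 ≤ dist μ X a :=
  Finset.sum_nonneg fun ω _ => by split_ifs <;> simp [hμ ω]

lemma margX_dist [Fintype α] [Fintype β] [DecidableEq α] [DecidableEq β] (μ : Ω → ℝ)
    (X : Ω → α × β) :
    margX (dist μ X) = dist μ (fun ω => (X ω).1) := by
  ext x
  simp only [margX, _root_.dist]
  rw [Finset.sum_comm]
  simp [Prod.ext_iff, ite_and]

lemma dist_le_dist_of_perm [DecidableEq α] {μ : Ω → ℝ} {X : Ω → α} {a b : α}
    (σ : Equiv.Perm Ω) (hX : ∀ ω, X (σ ω) = b ↔ X ω = a)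
    (hμ : ∀ ω, X ω = a → μ (σ ω) ≤ μ ω) : dist μ X b ≤ dist μ X a := by
  unfold _root_.dist
  rw [← Equiv.sum_comp σ]
  gcongr with ω
  simp only [hX]
  split_ifs with h
  · exact hμ ω h
  · rfl

end Distributions

section Entropy

variable {α β : Type*} [Fintype α] [Fintype β]

lemma ciSup_eq_of_forall_le {ι : Type*} [Finite ι] {f : ι → ℝ} (i₀ : ι) (h : ∀ i, f i ≤ f i₀) :
    ⨆ i, f i = f i₀ :=
  have : Nonempty ι := ⟨i₀⟩
  le_antisymm (ciSup_le h) (le_ciSup (Set.finite_range f).bddAbove i₀)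

lemma minEnt_eq_of_forall_le [Nonempty α] {P : α → ℝ} (x₀ : α) (h : ∀ x, P x ≤ P x₀) :
    minEnt P = -Real.log (P x₀) := by
  rw [minEnt, ciSup_eq_of_forall_le x₀ h]

lemma margY_mul_iSup_div_margY [Nonempty α] {P : α × β → ℝ} (hP : ∀ z, 0 ≤ P z) (y : β) :
    margY P y * ⨆ x, P (x, y) / margY P y = ⨆ x, P (x, y) := by
  by_cases h : margY P y = 0
  · have hzero : ∀ x, P (x, y) = 0 :=
      fun x => (Finset.sum_eq_zero_iff_of_nonneg fun x _ => hP (x, y)).1 h x (Finset.mem_univ x)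
    simp [h, hzero]
  · have hm : 0 ≤ margY P y := Finset.sum_nonneg fun x _ => hP (x, y)
    rw [Real.mul_iSup_of_nonneg hm]
    simp_rw [mul_div_cancel₀ _ h]

lemma condMinEnt_eq_neg_log_sum_iSup [Nonempty α] {P : α × β → ℝ} (hP : ∀ z, 0 ≤ P z) :
    condMinEnt P = -Real.log (∑ y, ⨆ x, P (x, y)) := by
  simp_rw [condMinEnt, margY_mul_iSup_div_margY hP]

lemma condMinEnt_eq_of_forall_le [Nonempty α] {P : α × β → ℝ} (hP : ∀ z, 0 ≤ P z) (x₀ : α)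
    (h : ∀ x y, P (x, y) ≤ P (x₀, y)) : condMinEnt P = -Real.log (margX P x₀) := by
  simp_rw [condMinEnt_eq_neg_log_sum_iSup hP, ciSup_eq_of_forall_le x₀ (h · _), margX]

end Entropy

section Weights

variable {w : ZMod 2 → ℝ}

lemma weight_one_mul_weight_add_one_le (hw₁ : 0 ≤ w 1) (hw : w 1 ≤ w 0) (v : ZMod 2) :
    w 1 * w (v + 1) ≤ w 0 * w v := by
  rcases ZMod.eq_zero_or_eq_one v with rfl | rfl
  · simpa using mul_le_mul hw hw hw₁ (hw₁.trans hw)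
  · rw [show (1 + 1 : ZMod 2) = 0 from rfl, mul_comm]

lemma weight_one_mul_prod_add_single_le {m : ℕ} (hw₁ : 0 ≤ w 1) (hw : w 1 ≤ w 0)
    (v : Fin m → ZMod 2) (j : Fin m) :
    w 1 * ∏ k, w (v k + (Pi.single j 1 : Fin m → ZMod 2) k) ≤ w 0 * ∏ k, w (v k) := by
  have hw_nonneg : ∀ x, 0 ≤ w x := by
    intro x
    rcases ZMod.eq_zero_or_eq_one x with rfl | rfl
    exacts [hw₁.trans hw, hw₁]
  have hrest : ∏ k ∈ {j}ᶜ, w (v k + (Pi.single j 1 : Fin m → ZMod 2) k) = ∏ k ∈ {j}ᶜ, w (v k) :=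
    Finset.prod_congr rfl fun k hk => by
      rw [Pi.single_eq_of_ne (by simpa using hk), add_zero]
  rw [Fintype.prod_eq_mul_prod_compl j, Fintype.prod_eq_mul_prod_compl j, hrest,
    ← mul_assoc, ← mul_assoc, Pi.single_eq_same]
  exact mul_le_mul_of_nonneg_right (weight_one_mul_weight_add_one_le hw₁ hw (v j))
    (Finset.prod_nonneg fun k _ => hw_nonneg _)

end Weights

lemma muXOR_nonneg {m : ℕ} {p : ℝ} (hp₀ : 0 ≤ p) (hp₁ : p ≤ 1) (ω : ZMod 2 × (Fin m → ZMod 2)) :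
    0 ≤ muXOR m p ω := by
  unfold muXOR
  apply mul_nonneg
  · split_ifs <;> linarith
  · exact Finset.prod_nonneg fun j _ => by split_ifs <;> linarith

lemma dist_fst_muXOR (m : ℕ) (p : ℝ) (s : ZMod 2) :
    dist (muXOR m p) Prod.fst s = if s = 0 then p else 1 - p := by
  have hmass : ∑ x : ZMod 2, (if x = 0 then p else 1 - p) = 1 := by
    rw [show ∑ x : ZMod 2, (if x = 0 then p else 1 - p) = p + (1 - p) from Fin.sum_univ_two _]
    ring
  have hpi : ∑ v : Fin m → ZMod 2, ∏ j, (if v j = 0 then p else 1 - p) = 1 := by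
    rw [← Fintype.prod_sum (fun _ x => if x = 0 then p else 1 - p), hmass, Finset.prod_const_one]
  simp [_root_.dist, muXOR, Fintype.sum_prod_type, ← Finset.mul_sum, hpi]

def xorFlip (n : ℕ) (i : Fin n) : ZMod 2 × (Fin (n - 1) → ZMod 2) :=
  if h : (i : ℕ) < n - 1 then (1, Pi.single ⟨i, h⟩ 1) else (1, 0)

lemma fst_xorFlip (n : ℕ) (i : Fin n) : (xorFlip n i).1 = 1 := by
  unfold xorFlip; split_ifs <;> rfl

lemma xorShare_add (n : ℕ) (i : Fin n) (ω ω' : ZMod 2 × (Fin (n - 1) → ZMod 2)) :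
    xorShare n i (ω + ω') = xorShare n i ω + xorShare n i ω' := by
  unfold xorShare
  split_ifs
  · rfl
  · simp only [Prod.fst_add, Prod.snd_add, Pi.add_apply, Finset.sum_add_distrib]
    ring

lemma xorShare_xorFlip (n : ℕ) (i j : Fin n) :
    xorShare n j (xorFlip n i) = if j = i then 1 else 0 := by
  have hi_lt := i.isLt
  have hj_lt := j.isLt
  unfold xorShare xorFlip
  by_cases hj : (j : ℕ) < n - 1 <;> by_cases hi : (i : ℕ) < n - 1
  · simp [hj, hi, Pi.single_apply, Fin.ext_iff]
  · simp [hj, hi, Fin.ext_iff, show (j : ℕ) ≠ i by omega]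
  · simp only [dif_neg hj, dif_pos hi, Finset.sum_pi_single', Finset.mem_univ, if_true,
      if_neg (show j ≠ i from fun h => hj (h ▸ hi))]
    rfl
  · simp [hi, show j = i from Fin.ext (by omega)]

lemma xorShare_add_xorFlip_of_ne {n : ℕ} {i j : Fin n} (h : j ≠ i)
    (ω : ZMod 2 × (Fin (n - 1) → ZMod 2)) : xorShare n j (ω + xorFlip n i) = xorShare n j ω := by
  rw [xorShare_add, xorShare_xorFlip, if_neg h, add_zero]

lemma muXOR_add_xorFlip_le {n : ℕ} {p : ℝ} (hp : 1 / 2 ≤ p) (hp₁ : p ≤ 1) (i : Fin n)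
    {ω : ZMod 2 × (Fin (n - 1) → ZMod 2)} (hω : ω.1 = 0) :
    muXOR (n - 1) p (ω + xorFlip n i) ≤ muXOR (n - 1) p ω := by
  obtain ⟨s, v⟩ := ω
  obtain rfl : s = 0 := hω
  have hw₁ : 0 ≤ 1 - p := by linarith
  have hw : 1 - p ≤ p := by linarith
  unfold xorFlip
  split_ifs
  · exact weight_one_mul_prod_add_single_le (w := fun x => if x = 0 then p else 1 - p) hw₁ hw v _
  · simp only [muXOR, Prod.mk_add_mk, zero_add, add_zero]
    exact mul_le_mul_of_nonneg_right (by simpa using hw)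
      (Finset.prod_nonneg fun j _ => by split_ifs <;> linarith)

/-- In the XOR-based `(n,n)`-threshold construction with bias
`p ∈ (1/2, 1)`, for every `F ⊂ [n]` with `|F| = n - 1` we have
`R_∞(S | V_F) = R_∞(S) = - log p`. -/
theorem xor_scheme_minEnt_secure (n : ℕ) (hn : 2 ≤ n) (p : ℝ)
    (hp : 1 / 2 < p) (hp1 : p < 1) (F : Finset (Fin n)) (hF : F.card = n - 1) :
    condMinEnt (dist (muXOR (n - 1) p)
        (fun ω => (ω.1, fun j : F => xorShare n j.1 ω))) = - Real.log p ∧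
    minEnt (dist (muXOR (n - 1) p) Prod.fst) = - Real.log p := by
  obtain ⟨i, -, hi⟩ : ∃ i ∈ (Finset.univ : Finset (Fin n)), i ∉ F :=
    Finset.exists_mem_notMem_of_card_lt_card (by rw [Finset.card_univ, Fintype.card_fin]; omega)
  have hfst_le : ∀ s, dist (muXOR (n - 1) p) Prod.fst s ≤ dist (muXOR (n - 1) p) Prod.fst 0 := by
    intro s
    simp only [dist_fst_muXOR]
    split_ifs <;> linarith
  set X := fun ω : ZMod 2 × (Fin (n - 1) → ZMod 2) => (ω.1, fun j : F => xorShare n j.1 ω)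
  have hX : ∀ ω, X (ω + xorFlip n i) = (ω.1 + 1, (X ω).2) := fun ω =>
    Prod.ext (by simp [X, fst_xorFlip])
      (funext fun j => xorShare_add_xorFlip_of_ne (fun h : (j : Fin n) = i => hi (h ▸ j.2)) ω)
  have hjoint_le : ∀ s y, dist (muXOR (n - 1) p) X (s, y) ≤ dist (muXOR (n - 1) p) X (0, y) := by
    intro s y
    rcases ZMod.eq_zero_or_eq_one s with rfl | rfl
    · rfl
    refine dist_le_dist_of_perm (Equiv.addRight (xorFlip n i)) (fun ω => ?_)
      fun ω hω => muXOR_add_xorFlip_le hp.le hp1.le i (congrArg Prod.fst hω)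
    simp [hX, X, Prod.ext_iff]
  refine ⟨?_, ?_⟩
  · have hμ := muXOR_nonneg (m := n - 1) (by linarith) hp1.le
    rw [condMinEnt_eq_of_forall_le (dist_apply_nonneg hμ X) 0 hjoint_le, margX_dist,
      dist_fst_muXOR, if_pos rfl]
  · rw [minEnt_eq_of_forall_le 0 hfst_le, dist_fst_muXOR, if_pos rfl]
end

section
/- In the XOR-based (n,n)-threshold construction with bias p ∈ (1/2, 1) and n ≥ 2, for the forbidden set F containing index n (e.g. F = {2,…,n}), S and V_F are not statistically independent; hence the scheme is non-perfect (H(S|V_F) < H(S)) while still min-entropy secure. -/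
open Finset Real Filter

lemma dist_apply {Ω α : Type*} [Fintype Ω] [DecidableEq α] (μ : Ω → ℝ) (X : Ω → α) (x : α) :
    dist μ X x = ∑ ω, if X ω = x then μ ω else 0 := rfl

lemma gibbs_strict {α : Type*} [Fintype α] (f g : α → ℝ)
    (hf : ∀ x, 0 < f x) (hg : ∀ x, 0 < g x)
    (hsum : ∑ x, g x ≤ ∑ x, f x) (x0 : α) (hne : f x0 ≠ g x0) :
    ∑ x, f x * Real.log (g x / f x) < 0 := by
  have hlt : ∑ x, f x * Real.log (g x / f x) < ∑ x, (g x - f x) := by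
    refine Finset.sum_lt_sum (fun x _ => ?_) ⟨x0, Finset.mem_univ x0, ?_⟩
    · have h := Real.log_le_sub_one_of_pos (div_pos (hg x) (hf x))
      have h2 := mul_le_mul_of_nonneg_left h (hf x).le
      calc f x * Real.log (g x / f x) ≤ f x * (g x / f x - 1) := h2
        _ = g x - f x := by rw [mul_sub, mul_one, mul_div_cancel₀ _ (ne_of_gt (hf x))]
    · have hne1 : g x0 / f x0 ≠ 1 := by
        intro h
        exact hne ((div_eq_one_iff_eq (ne_of_gt (hf x0))).mp h).symm
      have h := Real.log_lt_sub_one_of_pos (div_pos (hg x0) (hf x0)) hne1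
      have h2 := mul_lt_mul_of_pos_left h (hf x0)
      calc f x0 * Real.log (g x0 / f x0) < f x0 * (g x0 / f x0 - 1) := h2
        _ = g x0 - f x0 := by rw [mul_sub, mul_one, mul_div_cancel₀ _ (ne_of_gt (hf x0))]
  have h3 : ∑ x, (g x - f x) ≤ 0 := by
    rw [Finset.sum_sub_distrib]; linarith
  linarith

lemma mutual_info_pos {α β : Type*} [Fintype α] [Fintype β] (Q : α × β → ℝ)
    (hQ : ∀ z, 0 < Q z) (hsum : ∑ z, Q z = 1)
    (z0 : α × β) (hne : Q z0 ≠ margX Q z0.1 * margY Q z0.2) :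
    shannonEnt Q - shannonEnt (margY Q) < shannonEnt (margX Q) := by
  have hα : Nonempty α := ⟨z0.1⟩
  have hβ : Nonempty β := ⟨z0.2⟩
  have hmX : ∀ x, 0 < margX Q x := fun x =>
    Finset.sum_pos (fun y _ => hQ _) Finset.univ_nonempty
  have hmY : ∀ y, 0 < margY Q y := fun y =>
    Finset.sum_pos (fun x _ => hQ _) Finset.univ_nonempty
  set R : α × β → ℝ := fun z => margX Q z.1 * margY Q z.2 with hR
  have hRpos : ∀ z, 0 < R z := fun z => mul_pos (hmX _) (hmY _)
  have hmXsum : ∑ x, margX Q x = 1 := by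
    rw [← hsum, Fintype.sum_prod_type]; rfl
  have hmYsum : ∑ y, margY Q y = 1 := by
    rw [← hsum, Fintype.sum_prod_type_right]; rfl
  have hRsum : ∑ z, R z = 1 := by
    rw [Fintype.sum_prod_type]
    calc ∑ x, ∑ y, margX Q x * margY Q y
        = ∑ x, margX Q x * ∑ y, margY Q y := by
          refine Finset.sum_congr rfl fun x _ => ?_; rw [Finset.mul_sum]
      _ = 1 := by rw [hmYsum]; simpa using hmXsum
  have key := gibbs_strict Q R hQ hRpos (by rw [hRsum, hsum]) z0 hne
  have hsplit : ∀ z : α × β, Q z * Real.log (R z / Q z)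
      = Q z * Real.log (margX Q z.1) + Q z * Real.log (margY Q z.2)
        - Q z * Real.log (Q z) := by
    intro z
    rw [hR]
    rw [Real.log_div (ne_of_gt (mul_pos (hmX z.1) (hmY z.2))) (ne_of_gt (hQ z)),
      Real.log_mul (ne_of_gt (hmX z.1)) (ne_of_gt (hmY z.2))]
    ring
  have hsum_split : ∑ z, Q z * Real.log (R z / Q z)
      = (∑ z, Q z * Real.log (margX Q z.1)) + (∑ z, Q z * Real.log (margY Q z.2))
        - ∑ z, Q z * Real.log (Q z) := by
    rw [← Finset.sum_add_distrib, ← Finset.sum_sub_distrib]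
    exact Finset.sum_congr rfl fun z _ => hsplit z
  have hX : ∑ z : α × β, Q z * Real.log (margX Q z.1) = -shannonEnt (margX Q) := by
    rw [shannonEnt, Fintype.sum_prod_type, ← Finset.sum_neg_distrib]
    refine Finset.sum_congr rfl fun x _ => ?_
    show ∑ y, Q (x, y) * Real.log (margX Q x) = -(Real.negMulLog (margX Q x))
    rw [← Finset.sum_mul, Real.negMulLog]
    simp only [margX]
    ring
  have hY : ∑ z : α × β, Q z * Real.log (margY Q z.2) = -shannonEnt (margY Q) := by
    rw [shannonEnt, Fintype.sum_prod_type_right, ← Finset.sum_neg_distrib]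
    refine Finset.sum_congr rfl fun y _ => ?_
    show ∑ x, Q (x, y) * Real.log (margY Q y) = -(Real.negMulLog (margY Q y))
    rw [← Finset.sum_mul, Real.negMulLog]
    simp only [margY]
    ring
  have hQE : ∑ z : α × β, Q z * Real.log (Q z) = -shannonEnt Q := by
    rw [shannonEnt, ← Finset.sum_neg_distrib]
    refine Finset.sum_congr rfl fun z _ => ?_
    rw [Real.negMulLog]; ring
  rw [hsum_split, hX, hY, hQE] at key
  linarith

/-- In the XOR-based `(n,n)`-threshold construction with bias
`p ∈ (1/2, 1)` and `n ≥ 2`, for any forbidden set `F` with `|F| = n - 1`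
containing the last index `n`, the secret `S` and the shares `V_F` are not
statistically independent, and `H(S|V_F) < H(S)`: the scheme is non-perfect. -/
theorem xor_scheme_non_perfect (n : ℕ) (hn : 2 ≤ n) (p : ℝ)
    (hp : 1 / 2 < p) (hp1 : p < 1) (F : Finset (Fin n)) (hF : F.card = n - 1)
    (hlast : (⟨n - 1, by omega⟩ : Fin n) ∈ F) :
    (¬ ∀ (s : ZMod 2) (v : F → ZMod 2),
        dist (muXOR (n - 1) p) (fun ω => (ω.1, fun j : F => xorShare n j.1 ω)) (s, v) =
          margX (dist (muXOR (n - 1) p)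
              (fun ω => (ω.1, fun j : F => xorShare n j.1 ω))) s *
            margY (dist (muXOR (n - 1) p)
              (fun ω => (ω.1, fun j : F => xorShare n j.1 ω))) v) ∧
    condShannonEnt
        (dist (muXOR (n - 1) p) (fun ω => (ω.1, fun j : F => xorShare n j.1 ω))) <
      shannonEnt (dist (muXOR (n - 1) p) Prod.fst) := by
  have hp0 : 0 < p := by linarith
  have hq0 : 0 < 1 - p := by linarith
  set X : ZMod 2 × (Fin (n - 1) → ZMod 2) → ZMod 2 × (F → ZMod 2) :=
    fun ω => (ω.1, fun j : F => xorShare n j.1 ω) with hXdef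
  set last : Fin n := ⟨n - 1, by omega⟩ with hlastdef
  -- the unique missing index
  obtain ⟨k, hk⟩ : ∃ k : Fin n, Finset.univ \ F = {k} := by
    apply Finset.card_eq_one.mp
    rw [Finset.card_sdiff_of_subset (Finset.subset_univ F), Finset.card_univ, Fintype.card_fin, hF]
    omega
  have hkF : k ∉ F := by
    have hmem : k ∈ Finset.univ \ F := hk ▸ Finset.mem_singleton_self k
    exact (Finset.mem_sdiff.mp hmem).2
  have hmemF : ∀ j : Fin n, j ≠ k → j ∈ F := by
    intro j hj
    by_contra h
    have hmem : j ∈ Finset.univ \ F := Finset.mem_sdiff.mpr ⟨Finset.mem_univ j, h⟩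
    rw [hk, Finset.mem_singleton] at hmem; exact hj hmem
  have hklast : k ≠ last := fun h => hkF (h ▸ hlast)
  have hklt : (k : ℕ) < n - 1 := by
    have h2 := k.2
    rcases Nat.lt_or_ge (k : ℕ) (n - 1) with h | h
    · exact h
    · exfalso; exact hklast (Fin.ext (by simp [hlastdef]; omega))
  set k2 : Fin (n - 1) := ⟨(k : ℕ), hklt⟩ with hk2def
  have hgpos : ∀ x : ZMod 2, 0 < (if x = 0 then p else 1 - p) := fun x => by
    split <;> linarith
  have hμpos : ∀ ω : ZMod 2 × (Fin (n - 1) → ZMod 2), 0 < muXOR (n - 1) p ω := by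
    intro ω
    exact mul_pos (hgpos _) (Finset.prod_pos fun j _ => hgpos _)
  have hgsum : ∑ x : ZMod 2, (if x = 0 then p else 1 - p) = 1 := by
    have h : (Finset.univ : Finset (ZMod 2)) = {0, 1} := by decide
    rw [h, Finset.sum_insert (by decide), Finset.sum_singleton]
    simp [show (1 : ZMod 2) ≠ 0 by decide]
  have hμsum : ∑ ω : ZMod 2 × (Fin (n - 1) → ZMod 2), muXOR (n - 1) p ω = 1 := by
    have hW : ∑ w : Fin (n - 1) → ZMod 2, ∏ j, (if w j = 0 then p else 1 - p) = 1 := by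
      have h := Fintype.prod_sum (κ := fun _ : Fin (n - 1) => ZMod 2)
        (f := fun _ x => if x = 0 then p else 1 - p)
      rw [← h]
      simp [hgsum]
    rw [Fintype.sum_prod_type]
    have hx : ∀ x : ZMod 2, ∑ w : Fin (n - 1) → ZMod 2, muXOR (n - 1) p (x, w)
        = (if x = 0 then p else 1 - p) := by
      intro x
      simp only [muXOR]
      rw [← Finset.mul_sum Finset.univ (fun w : Fin (n - 1) → ZMod 2 => ∏ j, (if w j = 0 then p else 1 - p)) (if x = 0 then p else 1 - p), hW, mul_one]
    rw [Finset.sum_congr rfl fun x _ => hx x]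
    exact hgsum
  -- injectivity of X
  have hinj : Function.Injective X := by
    rintro ⟨s, w⟩ ⟨s', w'⟩ h
    simp only [hXdef, Prod.mk.injEq] at h
    obtain ⟨h1, h2⟩ := h
    have hshare : ∀ j : Fin n, (hj : j ∈ F) →
        xorShare n j (s, w) = xorShare n j (s', w') := by
      intro j hj
      exact congrFun h2 ⟨j, hj⟩
    have hcoord : ∀ i : Fin (n - 1), i ≠ k2 → w i = w' i := by
      intro i hi
      have hjF : (⟨(i : ℕ), by omega⟩ : Fin n) ∈ F := by
        apply hmemF
        intro hh
        apply hi
        apply Fin.ext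
        simpa [hk2def] using congrArg Fin.val hh
      have hs := hshare _ hjF
      simpa only [xorShare, dif_pos (show ((⟨(i : ℕ), by omega⟩ : Fin n) : ℕ) < n - 1 from i.2),
        Fin.eta] using hs
    have hsum2 : w k2 + ∑ j ∈ Finset.univ.erase k2, w j
        = w' k2 + ∑ j ∈ Finset.univ.erase k2, w' j := by
      have hs := hshare last hlast
      simp only [xorShare, dif_neg (show ¬ ((last : ℕ) < n - 1) by simp [hlastdef])] at hs
      rw [h1] at hs
      have hsum3 : ∑ j, w j = ∑ j, w' j := add_left_cancel hs
      rw [Finset.add_sum_erase _ w (Finset.mem_univ k2),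
        Finset.add_sum_erase _ w' (Finset.mem_univ k2)]
      exact hsum3
    have herase : ∑ j ∈ Finset.univ.erase k2, w j = ∑ j ∈ Finset.univ.erase k2, w' j :=
      Finset.sum_congr rfl fun j hj => hcoord j (Finset.ne_of_mem_erase hj)
    have hw : w = w' := by
      funext i
      by_cases hi : i = k2
      · subst hi
        rw [herase] at hsum2
        exact add_right_cancel hsum2
      · exact hcoord i hi
    simp [h1, hw]
  have hbij : Function.Bijective X := by
    refine (Fintype.bijective_iff_injective_and_card X).mpr ⟨hinj, ?_⟩
    simp [Fintype.card_fun, Fintype.card_coe, hF]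
  have hdist : ∀ ω x, X ω = x → dist (muXOR (n - 1) p) X x = muXOR (n - 1) p ω := by
    intro ω x hx
    rw [dist_apply, Finset.sum_eq_single ω]
    · rw [if_pos hx]
    · intro ω' _ hne
      rw [if_neg]
      intro h
      exact hne (hinj (h.trans hx.symm))
    · intro h; exact absurd (Finset.mem_univ ω) h
  have hQpos : ∀ x, 0 < dist (muXOR (n - 1) p) X x := by
    intro x
    obtain ⟨ω, rfl⟩ := hbij.2 x
    rw [hdist ω _ rfl]; exact hμpos ω
  have hQsum : ∑ x, dist (muXOR (n - 1) p) X x = 1 := by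
    simp only [dist_apply]
    rw [Finset.sum_comm]
    rw [Finset.sum_congr rfl (fun ω _ =>
      (Finset.sum_ite_eq Finset.univ (X ω) (fun _ => muXOR (n - 1) p ω)).trans
        (if_pos (Finset.mem_univ _)))]
    exact hμsum
  -- the four-point evaluation
  have hpoint : ∀ s c : ZMod 2,
      dist (muXOR (n - 1) p) X (s, fun j : F => if j.1 = last then s + c else 0)
        = (if s = 0 then p else 1 - p) * ((if c = 0 then p else 1 - p) * p ^ (n - 2)) := by
    intro s c
    have hXω : X (s, fun i => if i = k2 then c else 0)
        = (s, fun j : F => if j.1 = last then s + c else 0) := by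
      simp only [hXdef, Prod.mk.injEq, true_and]
      funext j
      by_cases hj : ((j : Fin n) : ℕ) < n - 1
      · have hjlast : (j : Fin n) ≠ last := by
          intro h
          rw [h] at hj
          simp [hlastdef] at hj
        rw [if_neg hjlast]
        simp only [xorShare, dif_pos hj]
        rw [if_neg]
        intro h
        apply hkF
        have hjk : (j : Fin n) = k := by
          apply Fin.ext
          simpa [hk2def] using congrArg Fin.val h
        exact hjk ▸ j.2
      · have hjlast : (j : Fin n) = last := by
          apply Fin.ext
          have := (j : Fin n).2
          simp only [hlastdef]
          omega
        rw [if_pos hjlast, hjlast]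
        simp only [xorShare, dif_neg (show ¬ ((last : ℕ) < n - 1) by simp [hlastdef])]
        congr 1
        simp
    rw [hdist _ _ hXω]
    simp only [muXOR]
    congr 1
    rw [← Finset.mul_prod_erase _ _ (Finset.mem_univ k2)]
    congr 1
    · simp
    · have hpc : ∀ i ∈ Finset.univ.erase k2,
          (if (if i = k2 then c else 0) = 0 then p else 1 - p) = p := by
        intro i hi
        rw [if_neg (Finset.ne_of_mem_erase hi), if_pos rfl]
      rw [Finset.prod_congr rfl hpc, Finset.prod_const,
        Finset.card_erase_of_mem (Finset.mem_univ _), Finset.card_univ, Fintype.card_fin,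
        show n - 1 - 1 = n - 2 from by omega]
  have hz1 : ((1 : ZMod 2) = 0) = False := eq_false (by decide)
  have hz0 : ((0 : ZMod 2) = 0) = True := eq_true rfl
  have hnonind : ¬ ∀ (s : ZMod 2) (v : F → ZMod 2),
      dist (muXOR (n - 1) p) X (s, v) =
        margX (dist (muXOR (n - 1) p) X) s * margY (dist (muXOR (n - 1) p) X) v := by
    intro hind
    have h00 := hpoint 0 0
    have h11 := hpoint 1 1
    have h01 := hpoint 0 1
    have h10 := hpoint 1 0
    simp only [add_zero, zero_add, ite_self] at h00 h01 h10
    simp only [show (1 : ZMod 2) + 1 = 0 from by decide, ite_self] at h11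
    simp only [hz0, hz1, if_true, if_false] at h00 h01 h10 h11
    have hkey : dist (muXOR (n - 1) p) X (0, fun _ : F => (0 : ZMod 2)) *
          dist (muXOR (n - 1) p) X (1, fun j : F => if j.1 = last then 1 else 0) =
        dist (muXOR (n - 1) p) X (1, fun _ : F => (0 : ZMod 2)) *
          dist (muXOR (n - 1) p) X (0, fun j : F => if j.1 = last then 1 else 0) := by
      rw [hind 0 (fun _ => 0), hind 1 (fun j => if j.1 = last then 1 else 0),
        hind 1 (fun _ => 0), hind 0 (fun j => if j.1 = last then 1 else 0)]
      ring
    rw [h00, h11, h10, h01] at hkey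
    have ht : 0 < p ^ (n - 2) := pow_pos hp0 _
    nlinarith [mul_pos (mul_pos (mul_pos hp0 hq0) (mul_pos ht ht))
      (show 0 < 2 * p - 1 by linarith)]
  have hfst : dist (muXOR (n - 1) p) Prod.fst = margX (dist (muXOR (n - 1) p) X) := by
    funext s
    simp only [margX, dist_apply]
    rw [Finset.sum_comm]
    refine Finset.sum_congr rfl fun ω _ => ?_
    by_cases h : ω.1 = s
    · rw [if_pos h, Finset.sum_eq_single (fun j : F => xorShare n j.1 ω)]
      · rw [if_pos (by simp [hXdef, h])]
      · intro v _ hv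
        rw [if_neg]
        simp only [hXdef, Prod.mk.injEq, not_and]
        intro _ h2
        exact hv h2.symm
      · intro h'; exact absurd (Finset.mem_univ _) h'
    · rw [if_neg h]
      refine (Finset.sum_eq_zero ?_).symm
      intro v _
      rw [if_neg]
      simp only [hXdef, Prod.mk.injEq, not_and]
      intro h1
      exact absurd h1 h
  refine ⟨hnonind, ?_⟩
  rw [hfst]
  push_neg at hnonind
  obtain ⟨s, v, hne⟩ := hnonind
  have := mutual_info_pos (dist (muXOR (n - 1) p) X) hQpos hQsum (s, v) hne
  simpa [condShannonEnt] using this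
end
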